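/- arXiv:1706.01259 — 3 statements merged into one kernel-verified Lean document; each statement's English description precedes it below -/
import Mathlib

section
/- Let T be a finite simplicial complex, v a vertex of T, n ∈ ℕ, S the subcomplex triangulating the closed star of v, and G an abelian group. Then every simplicial n-cycle z ∈ Z_n(S^{(n)}; G) can be written as a finite sum z = Σ g_i · ∂σ_i, where σ_1, ..., σ_m are the (n+1)-simplexes of T having v as a vertex and g_i ∈ G. -/
noncomputable section

/-- The simplicial boundary operator on `G`-chains of finite sets of vertices,
with signs determined by the linear order on the vertices. -/
def simpBd (G : Type) [AddCommGroup G] (V : Type) [LinearOrder V] :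
    (Finset V →₀ G) →+ (Finset V →₀ G) :=
  Finsupp.liftAddHom fun s =>
    { toFun := fun g => ∑ a ∈ s, Finsupp.single (s.erase a)
        ((-1 : ℤ) ^ ((s.filter (· < a)).card) • g)
      map_zero' := by simp
      map_add' := by intro a b; simp only [smul_add, Finsupp.single_add, Finset.sum_add_distrib] }

/-- Chains supported on the `m`-simplices (sets of `m+1` vertices) of `L`. -/
def simpChainsOn (G : Type) [AddCommGroup G] (V : Type) [LinearOrder V]
    (L : Set (Finset V)) (m : ℕ) : AddSubgroup (Finset V →₀ G) where
  carrier := {c | ∀ s ∈ c.support, s ∈ L ∧ s.card = m + 1}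
  add_mem' := by
    intro a b ha hb s hs
    rcases Finset.mem_union.1 (Finsupp.support_add hs) with h | h
    exacts [ha s h, hb s h]
  zero_mem' := by simp
  neg_mem' := by intro a ha s hs; exact ha s (by simpa using hs)

/-- Simplicial `n`-cycles of the complex `L`. -/
def simpCycles (G : Type) [AddCommGroup G] (V : Type) [LinearOrder V]
    (L : Set (Finset V)) (n : ℕ) : AddSubgroup (Finset V →₀ G) :=
  simpChainsOn G V L n ⊓ (simpBd G V).ker

/-- Simplicial `n`-boundaries of the complex `L`. -/
def simpBoundaries (G : Type) [AddCommGroup G] (V : Type) [LinearOrder V]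
    (L : Set (Finset V)) (n : ℕ) : AddSubgroup (Finset V →₀ G) :=
  AddSubgroup.map (simpBd G V) (simpChainsOn G V L (n + 1))

/-- Simplicial homology `H_n(L; G)`. -/
def simpHomology (G : Type) [AddCommGroup G] (V : Type) [LinearOrder V]
    (L : Set (Finset V)) (n : ℕ) : Type :=
  ↥(simpCycles G V L n) ⧸ ((simpBoundaries G V L n).addSubgroupOf (simpCycles G V L n))

instance (G : Type) [AddCommGroup G] (V : Type) [LinearOrder V]
    (L : Set (Finset V)) (n : ℕ) : AddCommGroup (simpHomology G V L n) := by
  unfold simpHomology; infer_instance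

end

/-!
The cone on the apex `v` is a chain homotopy between the identity and zero: with the sign
`(-1)^#{u ∈ s | u < v}` recording the position of `v` in `insert v s`, one has `∂C + C∂ = id`.
Hence a cycle `z` equals `∂(C z)`, and when `z` lives in the star of `v` the chain `C z` is
supported on simplices `insert v s` of the star, i.e. on the `(n+1)`-simplices containing `v`.
-/

noncomputable section

open Finset

lemma neg_one_pow_smul_neg_one_pow_smul {G : Type} [AddCommGroup G] (k : ℕ) (g : G) :
    (-1 : ℤ) ^ k • (-1 : ℤ) ^ k • g = g := by
  rw [smul_smul, ← mul_pow, neg_one_mul, neg_neg, one_pow, one_smul]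

variable (G : Type) [AddCommGroup G] (V : Type) [LinearOrder V] (v : V)

def simpCone : (Finset V →₀ G) →+ (Finset V →₀ G) :=
  Finsupp.liftAddHom fun s =>
    { toFun := fun g => if v ∈ s then 0 else
        Finsupp.single (insert v s) ((-1 : ℤ) ^ #(s.filter (· < v)) • g)
      map_zero' := by simp
      map_add' a b := by split_ifs <;> simp [smul_add, Finsupp.single_add] }

lemma simpBd_single (s : Finset V) (g : G) :
    simpBd G V (Finsupp.single s g) =
      ∑ a ∈ s, Finsupp.single (s.erase a) ((-1 : ℤ) ^ #(s.filter (· < a)) • g) :=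
  Finsupp.liftAddHom_apply_single _ _ _

variable {G V v}

lemma simpCone_single_of_mem {s : Finset V} (h : v ∈ s) (g : G) :
    simpCone G V v (Finsupp.single s g) = 0 := by
  simp [simpCone, h]

lemma simpCone_single_of_notMem {s : Finset V} (h : v ∉ s) (g : G) :
    simpCone G V v (Finsupp.single s g) =
      Finsupp.single (insert v s) ((-1 : ℤ) ^ #(s.filter (· < v)) • g) := by
  simp [simpCone, h]

lemma neg_one_pow_card_filter_lt_insert_erase {s : Finset V} {a : V} (hv : v ∉ s) (ha : a ∈ s) :
    (-1 : ℤ) ^ #((insert v s).filter (· < a)) * (-1) ^ #(s.filter (· < v)) =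
      -((-1) ^ #((s.erase a).filter (· < v)) * (-1) ^ #(s.filter (· < a))) := by
  rw [filter_insert, filter_erase]
  rcases (ne_of_mem_of_not_mem ha hv).lt_or_gt with hav | hva
  · have ha' : a ∈ s.filter (· < v) := mem_filter.2 ⟨ha, hav⟩
    obtain ⟨k, hk⟩ : ∃ k, #(s.filter (· < v)) = k + 1 :=
      Nat.exists_eq_add_one.2 (card_pos.2 ⟨a, ha'⟩)
    rw [if_neg (not_lt.2 hav.le), card_erase_of_mem ha', hk, Nat.add_sub_cancel, pow_succ]
    ring
  · have ha' : a ∉ s.filter (· < v) := fun h => (mem_filter.1 h).2.not_gt hva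
    rw [if_pos hva, erase_eq_of_notMem ha', card_insert_of_notMem (fun h => hv (mem_filter.1 h).1),
      pow_succ]
    ring

lemma simpCone_simpBd_single_of_mem {s : Finset V} (h : v ∈ s) (g : G) :
    simpCone G V v (simpBd G V (Finsupp.single s g)) = Finsupp.single s g := by
  rw [simpBd_single, map_sum, sum_eq_single v]
  · rw [simpCone_single_of_notMem (notMem_erase v s), insert_erase h, filter_erase,
      erase_eq_of_notMem (s := s.filter (· < v)) (fun h => lt_irrefl v (mem_filter.1 h).2),
      neg_one_pow_smul_neg_one_pow_smul]
  · intro a _ hav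
    exact simpCone_single_of_mem (mem_erase.2 ⟨Ne.symm hav, h⟩) _
  · exact fun hv => absurd h hv

lemma simpBd_simpCone_add_simpCone_simpBd_single_of_notMem {s : Finset V} (h : v ∉ s) (g : G) :
    simpBd G V (simpCone G V v (Finsupp.single s g)) +
      simpCone G V v (simpBd G V (Finsupp.single s g)) = Finsupp.single s g := by
  have h_apex : (-1 : ℤ) ^ #((insert v s).filter (· < v)) • (-1 : ℤ) ^ #(s.filter (· < v)) • g =
      g := by
    rw [filter_insert, if_neg (lt_irrefl v), neg_one_pow_smul_neg_one_pow_smul]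
  have h_cancel : ∀ a ∈ s,
      Finsupp.single ((insert v s).erase a)
          ((-1 : ℤ) ^ #((insert v s).filter (· < a)) • (-1 : ℤ) ^ #(s.filter (· < v)) • g) +
        simpCone G V v (Finsupp.single (s.erase a) ((-1 : ℤ) ^ #(s.filter (· < a)) • g)) = 0 := by
    intro a ha
    rw [simpCone_single_of_notMem (fun hv => h (mem_of_mem_erase hv)),
      erase_insert_of_ne (ne_of_mem_of_not_mem ha h).symm, ← Finsupp.single_add, smul_smul,
      smul_smul, ← add_smul, neg_one_pow_card_filter_lt_insert_erase h ha, neg_add_cancel,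
      zero_smul, Finsupp.single_zero]
  rw [simpCone_single_of_notMem h, simpBd_single, sum_insert h, erase_insert h, h_apex,
    simpBd_single, map_sum, add_assoc, ← sum_add_distrib, sum_eq_zero h_cancel, add_zero]

variable (G V v)

lemma simpBd_simpCone_add_simpCone_simpBd (c : Finset V →₀ G) :
    simpBd G V (simpCone G V v c) + simpCone G V v (simpBd G V c) = c := by
  suffices h : (simpBd G V).comp (simpCone G V v) + (simpCone G V v).comp (simpBd G V) =
      AddMonoidHom.id _ from DFunLike.congr_fun h c
  refine Finsupp.addHom_ext fun s g => ?_
  by_cases hs : v ∈ s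
  · simp [simpCone_single_of_mem hs, simpCone_simpBd_single_of_mem hs]
  · exact simpBd_simpCone_add_simpCone_simpBd_single_of_notMem hs g

variable {G V v}

lemma eq_simpBd_simpCone_of_simpBd_eq_zero {z : Finset V →₀ G} (hz : simpBd G V z = 0) :
    z = simpBd G V (simpCone G V v z) := by
  simpa [hz] using (simpBd_simpCone_add_simpCone_simpBd G V v z).symm

lemma exists_eq_insert_of_mem_support_simpCone {c : Finset V →₀ G} {σ : Finset V}
    (hσ : σ ∈ (simpCone G V v c).support) : ∃ s ∈ c.support, v ∉ s ∧ σ = insert v s := by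
  rw [← Finsupp.sum_single c, map_finsuppSum] at hσ
  obtain ⟨s, hs, hσs⟩ := mem_biUnion.1 (Finsupp.support_sum hσ)
  by_cases hvs : v ∈ s
  · simp [simpCone_single_of_mem hvs] at hσs
  · rw [simpCone_single_of_notMem hvs] at hσs
    exact ⟨s, hs, hvs, Finset.mem_singleton.1 (Finsupp.support_single_subset hσs)⟩

end

theorem star_skeleton_cycles_are_spanned_by_boundaries_general
    (V : Type) [LinearOrder V]
    (K : Finset (Finset V))
    (hdown : ∀ s ∈ K, ∀ t ⊆ s, t.Nonempty → t ∈ K)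
    (v : V)
    (n : ℕ)
    (G : Type) [AddCommGroup G]
    (z : Finset V →₀ G)
    (hsupp : ∀ s ∈ z.support, s.card = n + 1 ∧ s ∈ K ∧ ∃ t ∈ K, v ∈ t ∧ s ⊆ t)
    (hcycle : simpBd G V z = 0) :
    ∃ g : Finset V → G,
      z = ∑ σ ∈ K.filter (fun s => v ∈ s ∧ s.card = n + 2),
        simpBd G V (Finsupp.single σ (g σ)) := by
  have hsub : (simpCone G V v z).support ⊆ K.filter (fun s => v ∈ s ∧ s.card = n + 2) := by
    intro σ hσ
    obtain ⟨s, hs, hvs, rfl⟩ := exists_eq_insert_of_mem_support_simpCone hσ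
    obtain ⟨hcard, -, t, htK, hvt, hst⟩ := hsupp s hs
    refine Finset.mem_filter.2 ⟨?_, Finset.mem_insert_self v s, ?_⟩
    · exact hdown t htK _ (Finset.insert_subset hvt hst) (Finset.insert_nonempty v s)
    · rw [Finset.card_insert_of_notMem hvs, hcard]
  refine ⟨simpCone G V v z, ?_⟩
  rw [← map_sum, ← Finsupp.sum_of_support_subset _ hsub _ fun _ _ => Finsupp.single_zero _,
    Finsupp.sum_single]
  exact eq_simpBd_simpCone_of_simpBd_eq_zero hcycle

/-- Every simplicial `n`-cycle of the `n`-skeleton of the closed star of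
`v` is a combination `Σ gᵢ·∂σᵢ` of boundaries of the `(n+1)`-simplexes of `T` containing `v`. -/
theorem star_skeleton_cycles_are_spanned_by_boundaries
    (V : Type) [LinearOrder V]
    (K : Finset (Finset V))
    (hne : ∀ s ∈ K, Finset.Nonempty s)
    (hdown : ∀ s ∈ K, ∀ t ⊆ s, t.Nonempty → t ∈ K)
    (v : V) (hv : {v} ∈ K)
    (n : ℕ) (hn : 1 ≤ n)
    (G : Type) [AddCommGroup G]
    (z : Finset V →₀ G)
    (hsupp : ∀ s ∈ z.support, s.card = n + 1 ∧ s ∈ K ∧ ∃ t ∈ K, v ∈ t ∧ s ⊆ t)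
    (hcycle : simpBd G V z = 0) :
    ∃ g : Finset V → G,
      z = ∑ σ ∈ K.filter (fun s => v ∈ s ∧ s.card = n + 2),
        simpBd G V (Finsupp.single σ (g σ)) :=
  star_skeleton_cycles_are_spanned_by_boundaries_general V K hdown v n G z hsupp hcycle
end

section
/- Let T be a finite simplicial complex with a metric d compatible with the topology on |T|. Then for every δ > 0 there exist ε with 0 < ε < δ and a continuous map r : |T| → |T| such that: (1) r(σ) ⊆ σ for every simplex σ ∈ T, and (2) whenever x ∈ |T|, σ ∈ T, and d(x, σ) < ε, then r(x) ∈ σ. -/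
/-!
Barycentric coordinates glue to a continuous map `x ↦ λ(x)` from `|K|` to weight functions:
sending weights supported on a face to the point they describe is a continuous bijection from a
compact space onto `|K|`, hence a homeomorphism. For `0 < θ < 1 / #vertices`, the point `r x` is
the centre of mass of the truncated weights `max (λ_v(x) - θ) 0`, whose total is positive. Only
vertices with `λ_v(x) > θ` contribute, so `r x` stays in every face containing `x`, and it lies in
a face `σ` whenever all coordinates of `x` at vertices outside `σ` are below `θ`. By compactness,
this happens on a whole `ε`-neighbourhood of `σ`.
-/

open Metric Topology

section baryWeights

variable {E : Type*} {s t : Finset E} {w w₁ w₂ : E → ℝ}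

/-- Weights are functions on all of `E`, so that weights on different faces live in one space. -/
def baryWeights (t : Finset E) : Set (E → ℝ) :=
  {w | (∀ v, 0 ≤ w v) ∧ (∀ v ∉ t, w v = 0) ∧ ∑ v ∈ t, w v = 1}

lemma sum_subset_of_mem_baryWeights {M : Type*} [AddCommMonoid M] (hw : w ∈ baryWeights s)
    (hst : s ⊆ t) (f : E → ℝ → M) (hf : ∀ v, f v 0 = 0) :
    ∑ v ∈ t, f v (w v) = ∑ v ∈ s, f v (w v) :=
  (Finset.sum_subset hst fun v _ hv => by rw [hw.2.1 v hv, hf]).symm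

lemma baryWeights_mono (hst : s ⊆ t) : baryWeights s ⊆ baryWeights t := fun w hw =>
  ⟨hw.1, fun v hv => hw.2.1 v fun hvs => hv (hst hvs),
    by rw [sum_subset_of_mem_baryWeights hw hst (fun _ a => a) fun _ => rfl, hw.2.2]⟩

lemma isCompact_baryWeights (t : Finset E) : IsCompact (baryWeights t) := by
  have hclosed : IsClosed (baryWeights t) := by
    simp only [baryWeights, Set.ofPred_and, Set.ofPred_forall]
    exact .inter (isClosed_iInter fun v => isClosed_le continuous_const (continuous_apply v))
      (.inter (isClosed_iInter fun v => isClosed_iInter fun _ =>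
        isClosed_eq (continuous_apply v) continuous_const)
      (isClosed_eq (continuous_finsetSum _ fun v _ => continuous_apply v) continuous_const))
  refine (isCompact_univ_pi fun _ => isCompact_Icc (a := (0 : ℝ)) (b := 1)).of_isClosed_subset
    hclosed fun w hw v _ => ⟨hw.1 v, ?_⟩
  by_cases hv : v ∈ t
  · exact hw.2.2 ▸ Finset.single_le_sum (fun v _ => hw.1 v) hv
  · exact (hw.2.1 v hv).trans_le zero_le_one

variable [NormedAddCommGroup E] [NormedSpace ℝ E]

lemma sum_smul_mem_convexHull (hw : w ∈ baryWeights t) :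
    ∑ v ∈ t, w v • v ∈ convexHull ℝ (t : Set E) :=
  Finset.mem_convexHull'.2 ⟨w, fun v _ => hw.1 v, hw.2.2, rfl⟩

lemma exists_mem_baryWeights {x : E} (hx : x ∈ convexHull ℝ (t : Set E)) :
    ∃ w ∈ baryWeights t, ∑ v ∈ t, w v • v = x := by
  classical
  obtain ⟨w, hw₀, hw₁, hwx⟩ := Finset.mem_convexHull'.1 hx
  refine ⟨fun v => if v ∈ t then w v else 0, ⟨fun v => ?_, fun v hv => if_neg hv, ?_⟩, ?_⟩
  · by_cases hv : v ∈ t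
    · simpa only [if_pos hv] using hw₀ v hv
    · simp only [if_neg hv, le_rfl]
  · rwa [Finset.sum_ite_mem, Finset.inter_self]
  · simpa only [ite_smul, zero_smul, Finset.sum_ite_mem, Finset.inter_self] using hwx

lemma AffineIndependent.eq_of_mem_baryWeights (ht : AffineIndependent ℝ ((↑) : t → E))
    (hw₁ : w₁ ∈ baryWeights t) (hw₂ : w₂ ∈ baryWeights t)
    (h : ∑ v ∈ t, w₁ v • v = ∑ v ∈ t, w₂ v • v) : w₁ = w₂ := by
  funext v
  by_cases hv : v ∈ t
  · exact ht.eq_of_sum_eq_sum_subtype (hw₁.2.2.trans hw₂.2.2.symm) h v hv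
  · rw [hw₁.2.1 v hv, hw₂.2.1 v hv]

end baryWeights

namespace Geometry.SimplicialComplex

variable {E : Type*} [NormedAddCommGroup E] [NormedSpace ℝ E] {K : SimplicialComplex ℝ E}
  {s t : Finset E} {w₁ w₂ : E → ℝ}

/-- Weights on two faces describing the same point agree: both agree with weights on the
intersection, which contains the point by `inter_subset_convexHull`. -/
lemma eq_of_sum_smul_eq (hs : s ∈ K.faces) (ht : t ∈ K.faces) (hw₁ : w₁ ∈ baryWeights s)
    (hw₂ : w₂ ∈ baryWeights t) (h : ∑ v ∈ s, w₁ v • v = ∑ v ∈ t, w₂ v • v) : w₁ = w₂ := by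
  classical
  have hx : ∑ v ∈ s, w₁ v • v ∈ convexHull ℝ ((s ∩ t : Finset E) : Set E) := by
    rw [Finset.coe_inter]
    exact K.inter_subset_convexHull hs ht
      ⟨sum_smul_mem_convexHull hw₁, h ▸ sum_smul_mem_convexHull hw₂⟩
  obtain ⟨w, hw, hwx⟩ := exists_mem_baryWeights hx
  have hsum {r : Finset E} (hr : s ∩ t ⊆ r) : ∑ v ∈ r, w v • v = ∑ v ∈ s ∩ t, w v • v :=
    sum_subset_of_mem_baryWeights hw hr (fun v a => a • v) fun v => zero_smul ℝ v
  have h₁ : w₁ = w := (K.indep hs).eq_of_mem_baryWeights hw₁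
    (baryWeights_mono Finset.inter_subset_left hw) (by rw [hsum Finset.inter_subset_left, hwx])
  have h₂ : w₂ = w := (K.indep ht).eq_of_mem_baryWeights hw₂
    (baryWeights_mono Finset.inter_subset_right hw)
    (by rw [hsum Finset.inter_subset_right, hwx, h])
  rw [h₁, h₂]

lemma finite_vertices (hfin : K.faces.Finite) : K.vertices.Finite :=
  vertices_eq (K := K) ▸ hfin.biUnion fun t _ => t.finite_toSet

noncomputable def vertexFinset (hfin : K.faces.Finite) : Finset E :=
  (finite_vertices hfin).toFinset

lemma subset_vertexFinset (hfin : K.faces.Finite) (ht : t ∈ K.faces) : t ⊆ vertexFinset hfin :=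
  fun _ hv => (finite_vertices hfin).mem_toFinset.2 <|
    vertices_eq (K := K) ▸ Set.mem_biUnion ht (Finset.mem_coe.2 hv)

lemma isCompact_space (hfin : K.faces.Finite) : IsCompact K.space :=
  hfin.isCompact_biUnion fun t _ => t.finite_toSet.isCompact_convexHull (𝕜 := ℝ)

variable (K) in
def faceWeights : Set (E → ℝ) := ⋃ t ∈ K.faces, baryWeights t

section finite

variable (hfin : K.faces.Finite)

lemma sum_vertexFinset_smul {w : E → ℝ} (ht : t ∈ K.faces) (hw : w ∈ baryWeights t) :
    ∑ v ∈ vertexFinset hfin, w v • v = ∑ v ∈ t, w v • v :=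
  sum_subset_of_mem_baryWeights hw (subset_vertexFinset hfin ht) (fun v a => a • v)
    fun v => zero_smul ℝ v

noncomputable def pointOfWeights (w : K.faceWeights) : K.space :=
  ⟨∑ v ∈ vertexFinset hfin, (w : E → ℝ) v • v, by
    obtain ⟨t, ht, hw⟩ := Set.mem_iUnion₂.1 w.2
    rw [sum_vertexFinset_smul hfin ht hw]
    exact convexHull_subset_space ht (sum_smul_mem_convexHull hw)⟩

lemma pointOfWeights_bijective : Function.Bijective (pointOfWeights hfin) := by
  refine ⟨fun w₁ w₂ h => ?_, fun x => ?_⟩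
  · obtain ⟨s, hs, hw₁⟩ := Set.mem_iUnion₂.1 w₁.2
    obtain ⟨t, ht, hw₂⟩ := Set.mem_iUnion₂.1 w₂.2
    have h' := congrArg Subtype.val h
    simp only [pointOfWeights, sum_vertexFinset_smul hfin hs hw₁,
      sum_vertexFinset_smul hfin ht hw₂] at h'
    exact Subtype.ext (eq_of_sum_smul_eq hs ht hw₁ hw₂ h')
  · obtain ⟨t, ht, hx⟩ := mem_space_iff.1 x.2
    obtain ⟨w, hw, hwx⟩ := exists_mem_baryWeights hx
    exact ⟨⟨w, Set.mem_biUnion ht hw⟩, Subtype.ext <|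
      (sum_vertexFinset_smul hfin ht hw).trans hwx⟩

lemma continuous_pointOfWeights : Continuous (pointOfWeights hfin) :=
  Continuous.subtype_mk (continuous_finsetSum _ fun v _ =>
    ((continuous_apply v).comp continuous_subtype_val).smul continuous_const) _

noncomputable def weightsHomeomorph : K.faceWeights ≃ₜ K.space :=
  have : CompactSpace K.faceWeights := isCompact_iff_compactSpace.1 <|
    hfin.isCompact_biUnion fun t _ => isCompact_baryWeights t
  (continuous_pointOfWeights hfin).homeoOfEquivCompactToT2
    (f := Equiv.ofBijective _ (pointOfWeights_bijective hfin))

noncomputable def baryCoord (x : K.space) : E → ℝ := (weightsHomeomorph hfin).symm x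

lemma continuous_baryCoord : Continuous (baryCoord hfin) :=
  continuous_subtype_val.comp (weightsHomeomorph hfin).symm.continuous

lemma baryCoord_mem_baryWeights {x : K.space} (ht : t ∈ K.faces)
    (hx : (x : E) ∈ convexHull ℝ (t : Set E)) : baryCoord hfin x ∈ baryWeights t := by
  obtain ⟨w, hw, hwx⟩ := exists_mem_baryWeights hx
  have : (weightsHomeomorph hfin).symm x = ⟨w, Set.mem_biUnion ht hw⟩ :=
    (weightsHomeomorph hfin).symm_apply_eq.2 <| Subtype.ext <|
      ((sum_vertexFinset_smul hfin ht hw).trans hwx).symm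
  rw [baryCoord, this]
  exact hw

lemma sum_baryCoord (x : K.space) : ∑ v ∈ vertexFinset hfin, baryCoord hfin x v = 1 := by
  obtain ⟨t, ht, hx⟩ := mem_space_iff.1 x.2
  have hw := baryCoord_mem_baryWeights hfin ht hx
  rw [sum_subset_of_mem_baryWeights hw (subset_vertexFinset hfin ht) (fun _ a => a)
    fun _ => rfl, hw.2.2]

variable {θ : ℝ}

noncomputable def truncationMap (θ : ℝ) (x : K.space) : E :=
  (vertexFinset hfin).centerMass (fun v => max (baryCoord hfin x v - θ) 0) id

lemma sum_max_baryCoord_sub_pos (hθ : (vertexFinset hfin).card * θ < 1) (x : K.space) :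
    0 < ∑ v ∈ vertexFinset hfin, max (baryCoord hfin x v - θ) 0 :=
  calc 0 < 1 - (vertexFinset hfin).card * θ := by linarith
    _ = ∑ v ∈ vertexFinset hfin, (baryCoord hfin x v - θ) := by
      rw [Finset.sum_sub_distrib, sum_baryCoord, Finset.sum_const, nsmul_eq_mul]
    _ ≤ _ := Finset.sum_le_sum fun v _ => le_max_left _ _

lemma continuous_truncationMap (hθ : (vertexFinset hfin).card * θ < 1) :
    Continuous (truncationMap hfin θ) := by
  have hw (v : E) : Continuous fun x => max (baryCoord hfin x v - θ) 0 :=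
    (((continuous_apply v).comp (continuous_baryCoord hfin)).sub continuous_const).max
      continuous_const
  exact ((continuous_finsetSum _ fun v _ => hw v).inv₀ fun x =>
    (sum_max_baryCoord_sub_pos hfin hθ x).ne').smul
      (continuous_finsetSum _ fun v _ => (hw v).smul continuous_const)

lemma truncationMap_mem_convexHull (hθ : (vertexFinset hfin).card * θ < 1) {x : K.space}
    (hx : ∀ v ∈ vertexFinset hfin, v ∉ s → baryCoord hfin x v ≤ θ) :
    truncationMap hfin θ x ∈ convexHull ℝ (s : Set E) := by
  classical
  set w := fun v => max (baryCoord hfin x v - θ) 0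
  have hsupp : (vertexFinset hfin).filter (fun v => w v ≠ 0) ⊆ s := fun v hv => by
    rw [Finset.mem_filter] at hv
    by_contra hvs
    exact hv.2 (max_eq_right (by linarith [hx v hv.1 hvs]))
  rw [truncationMap, ← Finset.centerMass_filter_ne_zero]
  refine convexHull_mono (Finset.coe_subset.2 hsupp)
    (Finset.centerMass_id_mem_convexHull _ (fun v _ => le_max_right _ _) ?_)
  rw [Finset.sum_filter_ne_zero]
  exact sum_max_baryCoord_sub_pos hfin hθ x

lemma truncationMap_mem_convexHull_of_mem (hθ₀ : 0 ≤ θ)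
    (hθ : (vertexFinset hfin).card * θ < 1) {x : K.space} (hs : s ∈ K.faces)
    (hx : (x : E) ∈ convexHull ℝ (s : Set E)) :
    truncationMap hfin θ x ∈ convexHull ℝ (s : Set E) :=
  truncationMap_mem_convexHull hfin hθ fun v _ hv =>
    ((baryCoord_mem_baryWeights hfin hs hx).2.1 v hv).trans_le hθ₀

lemma truncationMap_mem_space (hθ₀ : 0 ≤ θ) (hθ : (vertexFinset hfin).card * θ < 1)
    (x : K.space) : truncationMap hfin θ x ∈ K.space := by
  obtain ⟨t, ht, hx⟩ := mem_space_iff.1 x.2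
  exact convexHull_subset_space ht (truncationMap_mem_convexHull_of_mem hfin hθ₀ hθ ht hx)

noncomputable def truncationRetraction (hθ₀ : 0 ≤ θ)
    (hθ : (vertexFinset hfin).card * θ < 1) : C(K.space, K.space) :=
  ⟨fun x => ⟨truncationMap hfin θ x, truncationMap_mem_space hfin hθ₀ hθ x⟩,
    (continuous_truncationMap hfin hθ).subtype_mk _⟩

/-- The points of `|K|` with a coordinate `≥ θ` outside `s` form a compact set disjoint from the
compact face `s`, so they keep a positive distance from it. -/
lemma eventually_baryCoord_lt (hs : s ∈ K.faces) (hθ : 0 < θ) :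
    ∀ᶠ ε in 𝓝[>] 0, ∀ x : K.space, infDist (x : E) (convexHull ℝ (s : Set E)) < ε →
      ∀ v ∈ vertexFinset hfin, v ∉ s → baryCoord hfin x v < θ := by
  have : CompactSpace K.space := isCompact_iff_compactSpace.1 (isCompact_space hfin)
  set C : Set K.space :=
    ⋃ v ∈ {v | v ∈ vertexFinset hfin ∧ v ∉ s}, {x | θ ≤ baryCoord hfin x v}
  have hC : IsClosed C :=
    ((vertexFinset hfin).finite_toSet.subset fun v hv => hv.1).isClosed_biUnion fun v _ =>
      isClosed_le continuous_const ((continuous_apply v).comp (continuous_baryCoord hfin))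
  have hCE : IsClosed ((↑) '' C : Set E) :=
    (hC.isCompact.image continuous_subtype_val).isClosed
  have hsub : convexHull ℝ (s : Set E) ⊆ ((↑) '' C)ᶜ := by
    rintro _ hy ⟨x, hxC, rfl⟩
    obtain ⟨v, ⟨-, hvs⟩, hθv⟩ := Set.mem_iUnion₂.1 hxC
    exact hθ.not_ge (hθv.trans_eq ((baryCoord_mem_baryWeights hfin hs hy).2.1 v hvs))
  obtain ⟨δ, hδ, hthick⟩ := (s.finite_toSet.isCompact_convexHull (𝕜 := ℝ))
    |>.exists_thickening_subset_open hCE.isOpen_compl hsub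
  have hne : (convexHull ℝ (s : Set E)).Nonempty :=
    convexHull_nonempty_iff.2 (Finset.coe_nonempty.2 (nonempty_of_mem_faces hs))
  filter_upwards [Ioc_mem_nhdsGT hδ] with ε hε x hx v hv hvs
  by_contra! hθv
  exact hthick (thickening_mono hε.2 _ ((mem_thickening_iff_infDist_lt hne).2 hx))
    ⟨x, Set.mem_iUnion₂.2 ⟨v, ⟨hv, hvs⟩, hθv⟩, rfl⟩

end finite

end Geometry.SimplicialComplex

open Geometry.SimplicialComplex

/-- On a finite simplicial complex there are, for every `δ > 0`, an
`0 < ε < δ` and a simplex-preserving self-map `r` of the polyhedron moving each point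
`ε`-close to a simplex into that simplex. -/
theorem simplex_preserving_retraction
    (E : Type) [NormedAddCommGroup E] [NormedSpace ℝ E]
    (K : Geometry.SimplicialComplex ℝ E) (hfin : K.faces.Finite)
    (δ : ℝ) (hδ : 0 < δ) :
    ∃ ε : ℝ, 0 < ε ∧ ε < δ ∧
      ∃ r : C(↥K.space, ↥K.space),
        (∀ s ∈ K.faces, ∀ x : ↥K.space,
          (x : E) ∈ convexHull ℝ (s : Set E) → (r x : E) ∈ convexHull ℝ (s : Set E)) ∧
        (∀ s ∈ K.faces, ∀ x : ↥K.space,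
          Metric.infDist (x : E) (convexHull ℝ (s : Set E)) < ε →
            (r x : E) ∈ convexHull ℝ (s : Set E)) := by
  set N : ℝ := ((vertexFinset hfin).card : ℝ)
  have hθ : 0 < (N + 1)⁻¹ := by positivity
  have hNθ : N * (N + 1)⁻¹ < 1 := by
    rw [← div_eq_mul_inv, div_lt_one (by positivity)]
    linarith
  obtain ⟨ε, hε_near, hε⟩ := ((hfin.eventually_all.2 fun s hs =>
    eventually_baryCoord_lt hfin hs hθ).and (Ioo_mem_nhdsGT hδ)).exists
  refine ⟨ε, hε.1, hε.2, truncationRetraction hfin hθ.le hNθ, fun s hs x hx => ?_,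
    fun s hs x hx => ?_⟩
  · exact truncationMap_mem_convexHull_of_mem hfin hθ.le hNθ hs hx
  · exact truncationMap_mem_convexHull hfin hNθ fun v hv hvs => (hε_near s hs x hx v hv hvs).le
end

section
/- Let X be a compact metrizable space and n ≥ 0. Then S^n is an absolute extensor for X (i.e., every map from a closed subset of X to S^n extends over X) if and only if the covering dimension of X is at most n. -/
noncomputable section

open scoped Topology

/-- A `G`-valued function on `m`-tuples is locally zero if it vanishes on all tuples
contained in a single member of some open cover. -/
def LocallyZero {m : ℕ} {X G : Type} [TopologicalSpace X] [Zero G]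
    (f : (Fin m → X) → G) : Prop :=
  ∃ U : Set (Set X), (∀ u ∈ U, IsOpen u) ∧ ⋃₀ U = Set.univ ∧
    ∀ t : Fin m → X, (∃ u ∈ U, ∀ i, t i ∈ u) → f t = 0

/-- The Alexander–Spanier coboundary operator. -/
def ASd {k : ℕ} {X G : Type} [AddCommGroup G] (ψ : (Fin k → X) → G) :
    (Fin (k + 1) → X) → G :=
  fun t => ∑ i : Fin (k + 1), (-1 : ℤ) ^ (i : ℕ) • ψ (t ∘ i.succAbove)

/-- Vanishing of the degree-`k` Čech (Alexander–Spanier) cohomology of `X` with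
coefficients in `G`. -/
def CechCohZero (k : ℕ) (X : Type) [TopologicalSpace X] (G : Type) [AddCommGroup G] : Prop :=
  ∀ φ : (Fin (k + 1) → X) → G, LocallyZero (ASd φ) →
    ∃ ψ : (Fin k → X) → G, LocallyZero (fun t => φ t - ASd ψ t)

/-- A compact metrizable continuum is `G`-acyclic if its Čech cohomology with coefficients
in `G` vanishes in every positive degree. -/
def IsGAcyclic (G : Type) [AddCommGroup G] (Z : Type) [TopologicalSpace Z] : Prop :=
  ∀ k : ℕ, CechCohZero (k + 1) Z G

/-- Cohomological dimension `dim_G X ≤ n`, via surjectivity of the restriction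
`Ȟⁿ(X;G) → Ȟⁿ(A;G)` for every closed `A ⊆ X`. -/
def CohDimLE (G : Type) [AddCommGroup G] (X : Type) [TopologicalSpace X] (n : ℕ) : Prop :=
  ∀ A : Set X, IsClosed A →
    ∀ φ : (Fin (n + 1) → ↥A) → G, LocallyZero (ASd φ) →
      ∃ Φ : (Fin (n + 1) → X) → G, LocallyZero (ASd Φ) ∧
        ∃ ψ : (Fin n → ↥A) → G,
          LocallyZero (fun t => φ t - Φ (fun i => (t i : X)) - ASd ψ t)

/-- `K` is an absolute extensor for `X` (`X τ K`). -/
def IsAbsExtensor (X : Type) [TopologicalSpace X] (K : Type) [TopologicalSpace K] : Prop :=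
  ∀ A : Set X, IsClosed A → ∀ f : C(↥A, K),
    ∃ g : C(X, K), ∀ a : ↥A, g ↑a = f a

/-- `P` is an absolute neighborhood extensor for metrizable spaces. -/
def IsANE (P : Type) [TopologicalSpace P] : Prop :=
  ∀ (X : Type) [TopologicalSpace X] [TopologicalSpace.MetrizableSpace X],
    ∀ A : Set X, IsClosed A → ∀ f : C(↥A, P),
      ∃ U : Set X, IsOpen U ∧ ∃ hAU : A ⊆ U, ∃ g : C(↥U, P),
        ∀ (a : X) (ha : a ∈ A), g ⟨a, hAU ha⟩ = f ⟨a, ha⟩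

/-- An ANR: a metrizable absolute neighborhood extensor for metrizable spaces. -/
def IsANR (P : Type) [TopologicalSpace P] : Prop :=
  TopologicalSpace.MetrizableSpace P ∧ IsANE P

/-- A compactum has trivial shape (is cell-like) iff it is nonempty and every map
into an ANR is null-homotopic. -/
def TrivialShape (Z : Type) [TopologicalSpace Z] : Prop :=
  Nonempty Z ∧ ∀ (P : Type) [TopologicalSpace P], IsANR P →
    ∀ f : C(Z, P), ∃ p : P, f.Homotopic (ContinuousMap.const Z p)

/-- Covering dimension at most `n`: every finite open cover has a finite open refinement
of order at most `n + 1`. -/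
def CovDimLE (X : Type) [TopologicalSpace X] (n : ℕ) : Prop :=
  ∀ U : Set (Set X), U.Finite → (∀ u ∈ U, IsOpen u) → ⋃₀ U = Set.univ →
    ∃ V : Set (Set X), V.Finite ∧ (∀ v ∈ V, IsOpen v) ∧ ⋃₀ V = Set.univ ∧
      (∀ v ∈ V, ∃ u ∈ U, v ⊆ u) ∧ ∀ x : X, {v ∈ V | x ∈ v}.ncard ≤ n + 1

/-- Composite bonding maps of an inverse sequence: `bond p i l : D (i+l) → D i`. -/
def bond {D : ℕ → Type} [∀ i, TopologicalSpace (D i)]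
    (p : ∀ i, C(D (i + 1), D i)) (i : ℕ) : ∀ l : ℕ, C(D (i + l), D i)
  | 0 => ContinuousMap.id _
  | (l + 1) => (bond p i l).comp (p (i + l))

/-- The inverse limit of an inverse sequence of spaces. -/
def seqLimit {D : ℕ → Type} [∀ i, TopologicalSpace (D i)]
    (p : ∀ i, C(D (i + 1), D i)) : Type :=
  { x : (i : ℕ) → D i // ∀ i, p i (x (i + 1)) = x i }

instance {D : ℕ → Type} [∀ i, TopologicalSpace (D i)] (p : ∀ i, C(D (i + 1), D i)) :
    TopologicalSpace (seqLimit p) := by unfold seqLimit; infer_instance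

/-- `X` is a compact polyhedron: homeomorphic to the underlying space of a finite
geometric simplicial complex. -/
def IsCompactPolyhedron (X : Type) [TopologicalSpace X] : Prop :=
  ∃ (N : ℕ) (K : Geometry.SimplicialComplex ℝ (EuclideanSpace ℝ (Fin N))),
    K.faces.Finite ∧ Nonempty (X ≃ₜ ↥K.space)

/-- The `n`-sphere (as in the December 2024 Mathlib `RelativeCWComplex.sphere`). -/
def RelativeCWComplex.sphere.{u} (n : ℤ) : TopCat.{u} :=
  TopCat.of <| ULift <| Metric.sphere (0 : EuclideanSpace ℝ <| Fin <| (n + 1).toNat) 1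

/-- The `n`-disk (as in the December 2024 Mathlib `RelativeCWComplex.disk`). -/
def RelativeCWComplex.disk.{u} (n : ℤ) : TopCat.{u} :=
  TopCat.of <| ULift <| Metric.closedBall (0 : EuclideanSpace ℝ <| Fin <| n.toNat) 1

/-- The inclusion of the `n`-sphere into the `(n + 1)`-disk. -/
def RelativeCWComplex.sphereInclusion.{u} (n : ℤ) :
    RelativeCWComplex.sphere.{u} n ⟶ RelativeCWComplex.disk.{u} (n + 1) :=
  TopCat.ofHom
    { toFun := fun ⟨p, hp⟩ ↦ ⟨p, le_of_eq hp⟩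
      continuous_toFun := ⟨fun t ⟨s, ⟨r, hro, hrs⟩, hst⟩ ↦ by
        rw [isOpen_induced_iff, ← hst, ← hrs]
        tauto⟩ }

/-- Attaching generalized cells (December 2024 Mathlib). -/
structure RelativeCWComplex.AttachGeneralizedCells.{u} {S D : TopCat.{u}} (f : S ⟶ D)
    (X X' : TopCat.{u}) where
  cells : Type u
  attachMaps : cells → (S ⟶ X)
  iso_pushout : X' ≅ CategoryTheory.Limits.pushout (CategoryTheory.Limits.Sigma.desc attachMaps)
    (CategoryTheory.Limits.Sigma.map fun _ ↦ f)

/-- Attaching `(n + 1)`-cells (December 2024 Mathlib). -/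
abbrev RelativeCWComplex.AttachCells.{u} (n : ℤ) :=
  RelativeCWComplex.AttachGeneralizedCells (RelativeCWComplex.sphereInclusion.{u} n)

/-- Relative CW-complex (December 2024 Mathlib). -/
structure RelativeCWComplex.{u} (A : TopCat.{u}) where
  sk : ℕ → TopCat.{u}
  sk_zero : sk 0 = A
  attachCells (n : ℕ) : RelativeCWComplex.AttachCells ((n : ℤ) - 1) (sk n) (sk (n + 1))

/-- CW-complex (December 2024 Mathlib `CWComplex`). -/
abbrev OldCWComplex.{u} := RelativeCWComplex.{u} (TopCat.of PEmpty)

/-- The inclusion `sk n ⟶ sk (n + 1)`. -/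
def RelativeCWComplex.inclusion.{u} {A : TopCat.{u}} (X : RelativeCWComplex.{u} A) (n : ℕ) :
    X.sk n ⟶ X.sk (n + 1) :=
  CategoryTheory.CategoryStruct.comp (CategoryTheory.Limits.pushout.inl _ _)
    (X.attachCells n).iso_pushout.inv

/-- The sequence of skeleta. -/
def RelativeCWComplex.sequence.{u} {A : TopCat.{u}} (X : RelativeCWComplex.{u} A) :
    CategoryTheory.Functor ℕ TopCat.{u} :=
  CategoryTheory.Functor.ofSequence X.inclusion

/-- The topological space underlying a relative CW-complex. -/
def RelativeCWComplex.toTopCat.{u} {A : TopCat.{u}} (X : RelativeCWComplex.{u} A) : TopCat.{u} :=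
  CategoryTheory.Limits.colimit X.sequence

/-- `X` carries the structure of a CW-complex. -/
def IsCWComplex (X : Type) [TopologicalSpace X] : Prop :=
  ∃ C : OldCWComplex.{0}, Nonempty (X ≃ₜ ↥C.toTopCat)

/-- `X` carries the structure of a finite CW-complex. -/
def IsFiniteCWComplex (X : Type) [TopologicalSpace X] : Prop :=
  ∃ C : OldCWComplex.{0}, (∀ n, Finite (C.attachCells n).cells) ∧
    (∃ N : ℕ, ∀ n, N ≤ n → IsEmpty (C.attachCells n).cells) ∧
    Nonempty (X ≃ₜ ↥C.toTopCat)

end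


noncomputable section

/-- The unit `n`-sphere in `ℝⁿ⁺¹`. -/
def nSphere (n : ℕ) : Set (EuclideanSpace ℝ (Fin (n + 1))) := Metric.sphere 0 1

/-- The unit `(n+1)`-ball in `ℝⁿ⁺¹`. -/
def nBall (n : ℕ) : Set (EuclideanSpace ℝ (Fin (n + 1))) := Metric.closedBall 0 1

end

/-!
Both directions pass through the property that every map `X → ℝⁿ⁺¹` is a uniform limit of
maps missing `0`. This is equivalent to `X τ Sⁿ` (normalise, resp. extend and rescale), and it
passes from `ℝᵐ` to `ℝᵐ⁺¹`, so `X τ Sⁿ` gives `X τ Sᵈ` for all `d ≥ n`.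

If `dim X ≤ n`, take a partition of unity of order `≤ n + 1` subordinate to a cover on which the
map oscillates little, and send each bump to a vertex near the image; with vertices in general
position, at most `n + 1` linearly independent vertices are active at each point, so the convex
combination never vanishes.

Conversely, a partition of unity subordinate to a finite cover is a map to a simplex. The
boundary of a `(d+1)`-face is a retract of `Sᵈ`, so `X τ Sᵈ` lets us push the map off each open
`(d+1)`-face without enlarging supports; doing this for all faces of dimension `> n` leaves a
partition of unity of order `≤ n + 1`, whose nonvanishing sets refine the cover.
-/

open Set Function Metric

theorem IsAbsExtensor.of_retract {X K L : Type} [TopologicalSpace X] [TopologicalSpace K]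
    [TopologicalSpace L] (h : IsAbsExtensor X K) (i : C(L, K)) (r : C(K, L))
    (hri : ∀ l, r (i l) = l) : IsAbsExtensor X L := by
  intro A hA f
  obtain ⟨g, hg⟩ := h A hA (i.comp f)
  exact ⟨r.comp g, fun a => by simp [hg, hri]⟩

theorem inv_norm_smul_mem_nSphere {n : ℕ} {v : EuclideanSpace ℝ (Fin (n + 1))} (hv : v ≠ 0) :
    ‖v‖⁻¹ • v ∈ nSphere n := by
  simp [nSphere, norm_smul, hv]

theorem ne_zero_of_mem_nSphere {n : ℕ} {v : EuclideanSpace ℝ (Fin (n + 1))} (hv : v ∈ nSphere n) :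
    v ≠ 0 :=
  norm_ne_zero_iff.1 ((mem_sphere_zero_iff_norm.1 hv).trans_ne one_ne_zero)

noncomputable def ContinuousMap.toSphere {Y : Type} [TopologicalSpace Y] {n : ℕ}
    (G : C(Y, EuclideanSpace ℝ (Fin (n + 1)))) (hG : ∀ y, G y ≠ 0) : C(Y, nSphere n) where
  toFun y := ⟨‖G y‖⁻¹ • G y, inv_norm_smul_mem_nSphere (hG y)⟩
  continuous_toFun :=
    ((G.continuous.norm.inv₀ fun y => norm_ne_zero_iff.2 (hG y)).smul G.continuous).subtype_mk _

def ApproxByNonvanishing (X : Type) [TopologicalSpace X] (m : ℕ) : Prop :=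
  ∀ F : C(X, EuclideanSpace ℝ (Fin m)), ∀ ε > 0,
    ∃ G : C(X, EuclideanSpace ℝ (Fin m)), (∀ x, G x ≠ 0) ∧ ∀ x, dist (G x) (F x) < ε

section Approx

variable {X : Type} [TopologicalSpace X]

theorem approxByNonvanishing_of_isAbsExtensor {n : ℕ} (h : IsAbsExtensor X (nSphere n)) :
    ApproxByNonvanishing X (n + 1) := by
  intro F ε hε
  set η := ε / 2 with hη_def
  have hη : 0 < η := half_pos hε
  set A : Set X := {x | η ≤ ‖F x‖}
  have hA : ∀ a : A, F a ≠ 0 := fun a => norm_pos_iff.1 (hη.trans_le a.2)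
  obtain ⟨g, hg⟩ := h A (isClosed_le continuous_const F.continuous.norm)
    ((F.restrict A).toSphere hA)
  have hg1 : ∀ x, ‖(g x : EuclideanSpace ℝ (Fin (n + 1)))‖ = 1 := fun x =>
    mem_sphere_zero_iff_norm.1 (g x).2
  have hnorm : ∀ x, ‖max ‖F x‖ η • (g x : EuclideanSpace ℝ (Fin (n + 1)))‖ = max ‖F x‖ η :=
    fun x => by rw [norm_smul, hg1, mul_one, Real.norm_of_nonneg (hη.le.trans (le_max_right _ _))]
  refine ⟨⟨fun x => max ‖F x‖ η • (g x : EuclideanSpace ℝ (Fin (n + 1))),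
    (F.continuous.norm.max continuous_const).smul (continuous_subtype_val.comp g.continuous)⟩,
    fun x h0 => ?_, fun x => ?_⟩
  · have := hnorm x
    rw [ContinuousMap.coe_mk] at h0
    rw [h0, norm_zero] at this
    exact (hη.trans_le (le_max_right _ _)).ne this
  · rw [dist_eq_norm, ContinuousMap.coe_mk]
    rcases le_or_gt η ‖F x‖ with hx | hx
    · have hFx : F x ≠ 0 := norm_pos_iff.1 (hη.trans_le hx)
      rw [hg ⟨x, hx⟩, max_eq_left hx]
      simp [ContinuousMap.toSphere, smul_smul, hFx, hε]
    · calc ‖max ‖F x‖ η • (g x : EuclideanSpace ℝ (Fin (n + 1))) - F x‖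
          ≤ max ‖F x‖ η + ‖F x‖ := (norm_sub_le _ _).trans_eq (by rw [hnorm])
        _ < ε := by rw [max_eq_right hx.le]; linarith

theorem isAbsExtensor_of_approxByNonvanishing [NormalSpace X] {n : ℕ}
    (h : ApproxByNonvanishing X (n + 1)) : IsAbsExtensor X (nSphere n) := by
  intro A hA f
  have : TietzeExtension (EuclideanSpace ℝ (Fin (n + 1))) := TietzeExtension.of_tvs ℝ
  obtain ⟨F, hF⟩ := ContinuousMap.exists_restrict_eq hA ((ContinuousMap.mk Subtype.val).comp f)
  have hFA : ∀ a : A, F a = f a := fun a => congrFun (congrArg DFunLike.coe hF) a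
  have hF1 : ∀ a : A, ‖F a‖ = 1 := fun a => by
    rw [hFA]; exact mem_sphere_zero_iff_norm.1 (f a).2
  obtain ⟨F', hF'0, hF'⟩ := h F (1 / 2) one_half_pos
  obtain ⟨u, hu0, hu1, hu01⟩ := exists_continuous_zero_one_of_isClosed
    (isClosed_le F.continuous.norm continuous_const) hA
    (Set.disjoint_left.2 fun x (hx : ‖F x‖ ≤ 1 / 2) hxA => by
      rw [hF1 ⟨x, hxA⟩] at hx; norm_num at hx)
  -- `G` is `F` near `A` and `F'` where `F` is small, and stays within `1/2` of `F`.
  let G : C(X, EuclideanSpace ℝ (Fin (n + 1))) :=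
    ⟨fun x => F x + (1 - u x) • (F' x - F x),
      F.continuous.add ((continuous_const.sub u.continuous).smul
        (F'.continuous.sub F.continuous))⟩
  have hG0 : ∀ x, G x ≠ 0 := by
    intro x hx
    by_cases hux : u x = 0
    · apply hF'0 x
      simpa [G, hux] using hx
    · have hFx : 1 / 2 < ‖F x‖ := lt_of_not_ge fun hle => hux (hu0 hle)
      have hsmall : ‖(1 - u x) • (F' x - F x)‖ < 1 / 2 := by
        rw [norm_smul, Real.norm_of_nonneg (by linarith [(hu01 x).2]), ← dist_eq_norm]
        exact (mul_le_of_le_one_left dist_nonneg (by linarith [(hu01 x).1])).trans_lt (hF' x)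
      rw [eq_neg_of_add_eq_zero_left hx, norm_neg] at hFx
      linarith
  refine ⟨G.toSphere hG0, fun a => Subtype.ext ?_⟩
  simp [ContinuousMap.toSphere, G, hu1 a.2, hFA, mem_sphere_zero_iff_norm.1 (f a).2]

theorem ApproxByNonvanishing.succ {m : ℕ} (h : ApproxByNonvanishing X m) :
    ApproxByNonvanishing X (m + 1) := by
  intro F ε hε
  let tail : C(X, EuclideanSpace ℝ (Fin m)) :=
    ⟨fun x => WithLp.toLp 2 fun j => F x j.succ,
      (PiLp.continuous_toLp 2 _).comp (continuous_pi fun j =>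
        (PiLp.continuous_apply 2 _ j.succ).comp F.continuous)⟩
  obtain ⟨G, hG0, hG⟩ := h tail ε hε
  let G' : C(X, EuclideanSpace ℝ (Fin (m + 1))) :=
    ⟨fun x => WithLp.toLp 2 (Fin.cons (F x 0) (G x)),
      (PiLp.continuous_toLp 2 _).comp (continuous_pi fun i => by
        refine Fin.cases ?_ (fun j => ?_) i
        · exact (PiLp.continuous_apply 2 _ 0).comp F.continuous
        · exact (PiLp.continuous_apply 2 _ j).comp G.continuous)⟩
  refine ⟨G', fun x hx => hG0 x ?_, fun x => ?_⟩
  · ext j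
    simpa [G'] using congrArg (· j.succ) hx
  · convert hG x using 1
    simp [G', tail, EuclideanSpace.dist_eq, Fin.sum_univ_succ]

theorem ApproxByNonvanishing.mono {m m' : ℕ} (h : ApproxByNonvanishing X m) (hm : m ≤ m') :
    ApproxByNonvanishing X m' := by
  induction m', hm using Nat.le_induction with
  | base => exact h
  | succ m' _ ih => exact ih.succ

end Approx

section GeneralPosition

open MeasureTheory Module

variable {E : Type} [NormedAddCommGroup E] [NormedSpace ℝ E]

theorem span_image_ne_top {ι : Type} (c : ι → E) {s : Finset ι} (hs : s.card < finrank ℝ E) :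
    Submodule.span ℝ (c '' s) ≠ ⊤ := by
  classical
  intro htop
  have := finrank_span_finset_le_card (R := ℝ) (s.image c)
  rw [Finset.coe_image, Set.finrank, htop, finrank_top] at this
  exact (this.trans Finset.card_image_le).not_gt hs

variable [FiniteDimensional ℝ E]

theorem exists_mem_ball_forall_notMem {Q : Set (Submodule ℝ E)} (hQ : Q.Finite)
    (hne : ∀ P ∈ Q, P ≠ ⊤) (x : E) {δ : ℝ} (hδ : 0 < δ) :
    ∃ z ∈ ball x δ, ∀ P ∈ Q, z ∉ P := by
  borelize E
  have hnull : Measure.addHaar (⋃ P ∈ Q, (P : Set E)) = 0 :=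
    (measure_biUnion_null_iff hQ.countable).2 fun P hP =>
      Measure.addHaar_submodule _ P (hne P hP)
  obtain ⟨z, hz, hzP⟩ := Set.not_subset.1 fun hsub =>
    (measure_ball_pos Measure.addHaar x hδ).ne' (measure_mono_null hsub hnull)
  exact ⟨z, hz, fun P hP hzP' => hzP (Set.mem_biUnion hP hzP')⟩

theorem exists_update_linearIndepOn {ι : Type} [DecidableEq ι] {c : ι → E} {t : Finset ι}
    (hc : ∀ s ⊆ t, s.card ≤ finrank ℝ E → LinearIndepOn ℝ c s) {a : ι} (ha : a ∉ t) (x : E)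
    {δ : ℝ} (hδ : 0 < δ) :
    ∃ z ∈ ball x δ, ∀ s ⊆ insert a t, s.card ≤ finrank ℝ E →
      LinearIndepOn ℝ (update c a z) s := by
  let Q := (fun s : Finset ι => Submodule.span ℝ (c '' s)) ''
    ↑(t.powerset.filter fun s => s.card < finrank ℝ E)
  have hQne : ∀ P ∈ Q, P ≠ ⊤ := by
    rintro _ ⟨s, hs, rfl⟩
    exact span_image_ne_top c (Finset.mem_filter.1 hs).2
  obtain ⟨z, hz, hzQ⟩ := exists_mem_ball_forall_notMem ((Finset.finite_toSet _).image _) hQne x hδ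
  refine ⟨z, hz, fun s hs hcard => ?_⟩
  have hc_eq : ∀ s ⊆ t, EqOn (update c a z) c s := fun s hst _ hi =>
    update_of_ne (ne_of_mem_of_not_mem (hst hi) ha) _ _
  by_cases has : a ∈ s
  · have hst : s.erase a ⊆ t := fun i hi => by
      simpa [(Finset.mem_erase.1 hi).1] using hs (Finset.mem_of_mem_erase hi)
    have hlt : (s.erase a).card < finrank ℝ E := by
      rw [Finset.card_erase_of_mem has]
      have := s.card_pos.2 ⟨a, has⟩
      omega
    rw [← Finset.insert_erase has, Finset.coe_insert]
    refine ((hc _ hst hlt.le).congr (hc_eq _ hst).symm).insert ?_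
    rw [(hc_eq _ hst).image_eq, update_self]
    exact hzQ _ ⟨s.erase a, Finset.mem_filter.2 ⟨Finset.mem_powerset.2 hst, hlt⟩, rfl⟩
  · have hst : s ⊆ t := fun i hi => by
      simpa [show i ≠ a from fun h => has (h ▸ hi)] using hs hi
    exact (hc s hst hcard).congr (hc_eq s hst).symm

theorem exists_linearIndepOn_dist_lt {ι : Type} [Fintype ι] (q : ι → E) {δ : ℝ} (hδ : 0 < δ) :
    ∃ c : ι → E, (∀ i, dist (c i) (q i) < δ) ∧
      ∀ s : Finset ι, s.card ≤ finrank ℝ E → LinearIndepOn ℝ c s := by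
  classical
  suffices ∀ t : Finset ι, ∃ c : ι → E, (∀ i, dist (c i) (q i) < δ) ∧
      ∀ s ⊆ t, s.card ≤ finrank ℝ E → LinearIndepOn ℝ c s by
    obtain ⟨c, hc, hind⟩ := this Finset.univ
    exact ⟨c, hc, fun s => hind s s.subset_univ⟩
  intro t
  induction t using Finset.induction_on with
  | empty => exact ⟨q, fun i => by simpa using hδ, fun s hs _ => by
      simp [Finset.subset_empty.1 hs]⟩
  | insert a t ha ih =>
    obtain ⟨c, hc, hind⟩ := ih
    obtain ⟨z, hz, hzind⟩ := exists_update_linearIndepOn hind ha (q a) hδ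
    refine ⟨update c a z, fun i => ?_, hzind⟩
    rcases eq_or_ne i a with rfl | hia
    · simpa using hz
    · simpa [hia] using hc i

end GeneralPosition

section StdSimplex

variable {ι : Type} [Fintype ι]

theorem sum_smul_ne_zero_of_linearIndepOn {E : Type} [AddCommGroup E] [Module ℝ E]
    {w : ι → ℝ} (hw : w ∈ stdSimplex ℝ ι) {c : ι → E} (hc : LinearIndepOn ℝ c w.support) :
    ∑ i, w i • c i ≠ 0 := by
  classical
  intro h0
  have hzero := linearIndepOn_iff'.1 hc (Finset.univ.filter (w · ≠ 0)) w
    (fun i hi => by simpa using hi)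
    (by rw [Finset.sum_filter_of_ne fun i _ hi => left_ne_zero_of_smul hi, h0])
  have : ∑ i, w i = 0 := by
    rw [← Finset.sum_filter_ne_zero]
    exact Finset.sum_eq_zero hzero
  exact one_ne_zero (hw.2.symm.trans this)

theorem dist_sum_smul_le {E : Type} [SeminormedAddCommGroup E] [NormedSpace ℝ E]
    {w : ι → ℝ} (hw : w ∈ stdSimplex ℝ ι) {c : ι → E} {z : E} {r : ℝ}
    (h : ∀ i, w i ≠ 0 → dist (c i) z ≤ r) : dist (∑ i, w i • c i) z ≤ r := by
  classical
  rw [← mem_closedBall, ← Finset.sum_filter_of_ne fun i _ hi => left_ne_zero_of_smul hi]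
  refine (convex_closedBall z r).sum_mem (fun i _ => hw.1 i) ?_
    fun i hi => h i (Finset.mem_filter.1 hi).2
  rw [Finset.sum_filter_ne_zero]
  exact hw.2

end StdSimplex

section PartitionOfUnity

variable {X : Type} [TopologicalSpace X]

theorem exists_stdSimplex_map_subordinate [NormalSpace X] {ι : Type} [Fintype ι]
    (V : ι → Set X) (hVo : ∀ i, IsOpen (V i)) (hVcov : ⋃ i, V i = univ) :
    ∃ ψ : C(X, ι → ℝ), (∀ x, ψ x ∈ stdSimplex ℝ ι) ∧ ∀ x i, ψ x i ≠ 0 → x ∈ V i := by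
  obtain ⟨f, hf⟩ := PartitionOfUnity.exists_isSubordinate_of_locallyFinite isClosed_univ V hVo
    (locallyFinite_of_finite _) hVcov.ge
  refine ⟨⟨fun x i => f i x, continuous_pi fun i => (f i).continuous⟩,
    fun x => ⟨fun i => f.nonneg i x, ?_⟩, fun x i hi => hf i (subset_tsupport _ hi)⟩
  simpa [finsum_eq_sum_of_fintype] using f.sum_eq_one (mem_univ x)

/-- The refinement consists of the sets where the coordinates of `ψ` do not vanish. -/
theorem exists_refinement_of_stdSimplex_map {ι : Type} [Fintype ι] {U : Set (Set X)} {n : ℕ}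
    (ψ : C(X, ι → ℝ)) (hψ : ∀ x, ψ x ∈ stdSimplex ℝ ι)
    (hsub : ∀ i, ∃ u ∈ U, ∀ x, ψ x i ≠ 0 → x ∈ u) (hord : ∀ x, (ψ x).support.ncard ≤ n + 1) :
    ∃ V : Set (Set X), V.Finite ∧ (∀ v ∈ V, IsOpen v) ∧ ⋃₀ V = univ ∧
      (∀ v ∈ V, ∃ u ∈ U, v ⊆ u) ∧ ∀ x : X, {v ∈ V | x ∈ v}.ncard ≤ n + 1 := by
  refine ⟨range fun i => {x | ψ x i ≠ 0}, finite_range _, ?_, ?_, ?_, fun x => ?_⟩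
  · rintro _ ⟨i, rfl⟩
    exact isOpen_ne.preimage ((continuous_apply i).comp ψ.continuous)
  · refine eq_univ_of_forall fun x => ?_
    obtain ⟨i, -, hi⟩ := Finset.exists_ne_zero_of_sum_ne_zero ((hψ x).2.trans_ne one_ne_zero)
    exact ⟨_, mem_range_self i, hi⟩
  · rintro _ ⟨i, rfl⟩
    obtain ⟨u, hu, hiu⟩ := hsub i
    exact ⟨u, hu, hiu⟩
  · calc {v ∈ range fun i => {x | ψ x i ≠ 0} | x ∈ v}.ncard
        ≤ ((fun i => {x | ψ x i ≠ 0}) '' (ψ x).support).ncard := by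
          refine ncard_le_ncard ?_ (toFinite _)
          rintro _ ⟨⟨i, rfl⟩, hx⟩
          exact ⟨i, hx, rfl⟩
      _ ≤ n + 1 := (ncard_image_le (toFinite _)).trans (hord x)

end PartitionOfUnity

theorem approxByNonvanishing_of_covDimLE {X : Type} [TopologicalSpace X] [CompactSpace X]
    [NormalSpace X] {n : ℕ} (h : CovDimLE X n) : ApproxByNonvanishing X (n + 1) := by
  classical
  intro F ε hε
  have hε4 : 0 < ε / 4 := by positivity
  let cell : X → Set X := fun y => F ⁻¹' ball (F y) (ε / 4)
  have hcell : ∀ y, IsOpen (cell y) := fun y => isOpen_ball.preimage F.continuous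
  obtain ⟨t, ht⟩ := isCompact_univ.elim_finite_subcover cell hcell
    fun x _ => mem_iUnion.2 ⟨x, mem_ball_self hε4⟩
  obtain ⟨V, hVfin, hVo, hVcov, hVref, hVord⟩ := h (cell '' t) (t.finite_toSet.image _)
    (by rintro _ ⟨y, -, rfl⟩; exact hcell y)
    (eq_univ_of_univ_subset fun x hx => by simpa using ht hx)
  have : Fintype V := hVfin.fintype
  obtain ⟨ψ, hψ, hψV⟩ := exists_stdSimplex_map_subordinate (Subtype.val : V → Set X)
    (fun v => hVo v v.2) (by rwa [← sUnion_eq_iUnion])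
  have hord : ∀ x, (ψ x).support.ncard ≤ n + 1 := fun x =>
    (ncard_le_ncard_of_injOn (t := {v ∈ V | x ∈ v}) Subtype.val (fun v hv => ⟨v.2, hψV x v hv⟩)
      Subtype.val_injective.injOn (hVfin.subset fun _ hv => hv.1)).trans (hVord x)
  have hcenter : ∀ v : V, ∃ y ∈ t, (v : Set X) ⊆ cell y := fun v => by
    obtain ⟨_, ⟨y, hy, rfl⟩, hv⟩ := hVref v v.2
    exact ⟨y, hy, hv⟩
  choose y _ hy using hcenter
  obtain ⟨c, hc, hcind⟩ := exists_linearIndepOn_dist_lt (fun v => F (y v)) hε4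
  refine ⟨⟨fun x => ∑ v, ψ x v • c v, continuous_finsetSum _ fun v _ =>
    ((continuous_apply v).comp ψ.continuous).smul continuous_const⟩, fun x => ?_, fun x => ?_⟩
  · refine sum_smul_ne_zero_of_linearIndepOn (hψ x) ?_
    rw [← Set.coe_toFinset (ψ x).support]
    refine hcind _ ?_
    rw [finrank_euclideanSpace_fin, ← ncard_eq_toFinset_card']
    exact hord x
  · refine (dist_sum_smul_le (hψ x) fun v hv => ?_).trans_lt (by linarith : ε / 2 < ε)
    have hx : dist (F x) (F (y v)) < ε / 4 := hy v (hψV x v hv)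
    linarith [dist_triangle (c v) (F (y v)) (F x), hc v, dist_comm (F x) (F (y v))]

section Faces

variable {ι : Type}

theorem isClosed_setOf_support_subset {M : Type} [Zero M] [TopologicalSpace M] [T1Space M]
    (s : Set ι) : IsClosed {p : ι → M | p.support ⊆ s} := by
  simp only [support_subset_iff', ofPred_forall]
  exact isClosed_iInter fun i => isClosed_iInter fun _ =>
    isClosed_singleton.preimage (continuous_apply i)

theorem isOpen_setOf_subset_support {M : Type} [Zero M] [TopologicalSpace M] [T1Space M]
    (S : Finset ι) : IsOpen {p : ι → M | ↑S ⊆ p.support} := by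
  simp only [Set.subset_def, mem_support, Finset.mem_coe, ofPred_forall]
  exact isOpen_biInter_finset fun i _ => isOpen_compl_singleton.preimage (continuous_apply i)

theorem Finset.sum_sub_inf'_pos {S : Finset ι} (hS : S.Nonempty) {y : ι → ℝ}
    (hy : ∃ i ∈ S, S.inf' hS y < y i) : 0 < ∑ j ∈ S, (y j - S.inf' hS y) :=
  Finset.sum_pos' (fun _ hj => sub_nonneg.2 (S.inf'_le y hj))
    (hy.imp fun _ ⟨hi, hlt⟩ => ⟨hi, sub_pos.2 hlt⟩)

theorem Finset.exists_inf'_lt_of_ne {S : Finset ι} (hS : S.Nonempty) {y : ι → ℝ}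
    {i j : ι} (hi : i ∈ S) (hj : j ∈ S) (hne : y i ≠ y j) : ∃ k ∈ S, S.inf' hS y < y k := by
  rcases hne.lt_or_gt with h | h
  exacts [⟨j, hj, (S.inf'_le y hi).trans_lt h⟩, ⟨i, hi, (S.inf'_le y hj).trans_lt h⟩]

def faceBoundary [Fintype ι] (S : Finset ι) : Set (ι → ℝ) :=
  {p ∈ stdSimplex ℝ ι | p.support ⊂ S}

theorem isClosed_faceBoundary [Fintype ι] (S : Finset ι) : IsClosed (faceBoundary S) := by
  have : faceBoundary S =
      stdSimplex ℝ ι ∩ {p | p.support ⊆ S} ∩ {p : ι → ℝ | ↑S ⊆ p.support}ᶜ := by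
    ext p
    simp only [faceBoundary, ssubset_iff_subset_not_subset, mem_inter_iff, mem_ofPred_eq,
      mem_compl_iff, and_assoc]
  rw [this]
  exact ((isClosed_stdSimplex ℝ ι).inter (isClosed_setOf_support_subset _)).inter
    (isOpen_setOf_subset_support S).isClosed_compl

section FaceBoundary

variable [Fintype ι] {S : Finset ι} {p : ι → ℝ}

theorem inf'_eq_zero_of_mem_faceBoundary (hS : S.Nonempty) (hp : p ∈ faceBoundary S) :
    S.inf' hS p = 0 := by
  obtain ⟨i, hiS, hi⟩ := Set.not_subset.1 (ssubset_iff_subset_not_subset.1 hp.2).2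
  exact le_antisymm ((S.inf'_le p hiS).trans_eq (not_not.1 hi))
    (S.le_inf' hS p fun j _ => hp.1.1 j)

theorem sum_eq_one_of_mem_faceBoundary (hp : p ∈ faceBoundary S) : ∑ j ∈ S, p j = 1 := by
  rw [← hp.1.2, Finset.sum_subset S.subset_univ fun i _ hi => ?_]
  by_contra h
  exact hi (hp.2.subset h)

theorem exists_inf'_lt_of_mem_faceBoundary (hS : S.Nonempty) (hp : p ∈ faceBoundary S) :
    ∃ k ∈ S, S.inf' hS p < p k := by
  rw [inf'_eq_zero_of_mem_faceBoundary hS hp]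
  exact Finset.exists_lt_of_sum_lt (f := fun _ => 0)
    (by simp [sum_eq_one_of_mem_faceBoundary hp])

end FaceBoundary

noncomputable def faceProj [DecidableEq ι] (S : Finset ι) (hS : S.Nonempty) (y : ι → ℝ) :
    ι → ℝ :=
  fun i => if i ∈ S then (y i - S.inf' hS y) / ∑ j ∈ S, (y j - S.inf' hS y) else 0

section FaceProj

variable [DecidableEq ι] {S : Finset ι} (hS : S.Nonempty)

theorem continuousOn_faceProj :
    ContinuousOn (faceProj S hS) {y | ∃ i ∈ S, S.inf' hS y < y i} := by
  have hinf : Continuous fun y : ι → ℝ => S.inf' hS y :=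
    Continuous.finset_inf'_apply hS fun i _ => continuous_apply i
  refine continuousOn_pi.2 fun i => ?_
  by_cases hi : i ∈ S
  · simp only [faceProj, hi, if_true]
    exact ((continuous_apply i).sub hinf).continuousOn.div
      (continuous_finsetSum _ fun j _ => (continuous_apply j).sub hinf).continuousOn
      fun y hy => (S.sum_sub_inf'_pos hS hy).ne'
  · simp only [faceProj, hi, if_false]
    exact continuousOn_const

theorem faceProj_affine {y y' : ι → ℝ} {t c : ℝ} (ht : 0 < t)
    (h : ∀ i ∈ S, y' i = t * y i + c) : faceProj S hS y' = faceProj S hS y := by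
  have hinf : S.inf' hS y' = t * S.inf' hS y + c := by
    obtain ⟨i₀, hi₀, hmin⟩ := S.exists_mem_eq_inf' hS y
    refine le_antisymm ?_ (S.le_inf' hS _ fun j hj => ?_)
    · rw [hmin, ← h i₀ hi₀]; exact S.inf'_le y' hi₀
    · rw [h j hj]; gcongr; exact S.inf'_le y hj
  have hsub : ∀ i ∈ S, y' i - S.inf' hS y' = t * (y i - S.inf' hS y) := fun i hi => by
    rw [h i hi, hinf]; ring
  ext i
  unfold faceProj
  split_ifs with hi
  · rw [hsub i hi, Finset.sum_congr rfl hsub, ← Finset.mul_sum, mul_div_mul_left _ _ ht.ne']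
  · rfl

variable [Fintype ι]

theorem faceProj_mem_faceBoundary {y : ι → ℝ} (hy : ∃ i ∈ S, S.inf' hS y < y i) :
    faceProj S hS y ∈ faceBoundary S := by
  have hpos := S.sum_sub_inf'_pos hS hy
  obtain ⟨i₀, hi₀, hmin⟩ := S.exists_mem_eq_inf' hS y
  refine ⟨⟨fun i => ?_, ?_⟩, ssubset_iff_subset_not_subset.2 ⟨fun i hi => ?_, fun hsub => ?_⟩⟩
  · unfold faceProj
    split_ifs
    exacts [div_nonneg (sub_nonneg.2 (S.inf'_le y ‹_›)) hpos.le, le_rfl]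
  · simp only [faceProj, Finset.sum_ite_mem, Finset.univ_inter, ← Finset.sum_div]
    exact div_self hpos.ne'
  · by_contra hiS
    exact hi (if_neg hiS)
  · exact hsub (Finset.mem_coe.2 hi₀) (by simp [faceProj, hi₀, hmin])

theorem faceProj_eq_self {p : ι → ℝ} (hp : p ∈ faceBoundary S) : faceProj S hS p = p := by
  ext i
  by_cases hi : i ∈ S
  · simp [faceProj, hi, inf'_eq_zero_of_mem_faceBoundary hS hp, sum_eq_one_of_mem_faceBoundary hp]
  · simp only [faceProj, hi, if_false]
    by_contra h
    exact hi (hp.2.subset (Ne.symm h))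

end FaceProj

section FaceChart

variable [DecidableEq ι] {S : Finset ι} {i₀ : ι} {d : ℕ} (e : Fin (d + 1) ≃ S.erase i₀)

def faceChart (p : ι → ℝ) : EuclideanSpace ℝ (Fin (d + 1)) :=
  WithLp.toLp 2 fun j => p (e j) - p i₀

def faceUnchart (v : EuclideanSpace ℝ (Fin (d + 1))) : ι → ℝ :=
  fun i => if h : i ∈ S.erase i₀ then v (e.symm ⟨i, h⟩) else 0

theorem continuous_faceChart : Continuous (faceChart e) :=
  (PiLp.continuous_toLp 2 _).comp
    (continuous_pi fun _ => (continuous_apply _).sub (continuous_apply _))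

theorem continuous_faceUnchart : Continuous (faceUnchart e) := continuous_pi fun i => by
  by_cases hi : i ∈ S.erase i₀
  · simp only [faceUnchart, dif_pos hi]
    exact PiLp.continuous_apply 2 _ _
  · simp only [faceUnchart, dif_neg hi]
    exact continuous_const

theorem faceUnchart_smul_faceChart (t : ℝ) (p : ι → ℝ) :
    ∀ i ∈ S, faceUnchart e (t • faceChart e p) i = t * p i + -t * p i₀ := by
  intro i hi
  by_cases hi' : i ∈ S.erase i₀
  · simp only [faceUnchart, dif_pos hi']
    simp [faceChart]
    ring
  · obtain rfl : i = i₀ := by simpa [hi] using hi'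
    simp [faceUnchart]

theorem exists_inf'_lt_faceUnchart (hS : S.Nonempty) (hi₀ : i₀ ∈ S)
    {v : EuclideanSpace ℝ (Fin (d + 1))} (hv : v ≠ 0) :
    ∃ k ∈ S, S.inf' hS (faceUnchart e v) < faceUnchart e v k := by
  obtain ⟨j, hj⟩ : ∃ j, v j ≠ 0 := by
    by_contra! h0
    exact hv (by ext j; exact h0 j)
  refine S.exists_inf'_lt_of_ne _ (Finset.mem_of_mem_erase (e j).2) hi₀ ?_
  simp only [faceUnchart, dif_pos (e j).2, dif_neg (Finset.notMem_erase i₀ S), Subtype.coe_eta,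
    Equiv.symm_apply_apply]
  exact hj

theorem faceChart_ne_zero [Fintype ι] (hS : S.Nonempty) {p : ι → ℝ} (hp : p ∈ faceBoundary S) :
    faceChart e p ≠ 0 := by
  intro h0
  have hconst : ∀ i ∈ S, p i = p i₀ := fun i hi => by
    have := faceUnchart_smul_faceChart e 1 p i hi
    rw [h0, smul_zero] at this
    simp only [faceUnchart, WithLp.ofLp_zero, Pi.zero_apply, dite_eq_ite, ite_self] at this
    linarith
  obtain ⟨k, hk, hlt⟩ := exists_inf'_lt_of_mem_faceBoundary hS hp
  obtain ⟨i₁, hi₁, hmin⟩ := S.exists_mem_eq_inf' hS p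
  rw [hmin, hconst i₁ hi₁, hconst k hk] at hlt
  exact hlt.false

end FaceChart

end Faces

/-- `faceChart` followed by normalisation embeds the boundary of a `(d+1)`-face in `Sᵈ`, and
`faceProj ∘ faceUnchart` retracts `Sᵈ` back onto it. -/
theorem isAbsExtensor_faceBoundary {X ι : Type} [TopologicalSpace X] [Fintype ι] [DecidableEq ι]
    {d : ℕ} (h : IsAbsExtensor X (nSphere d)) {S : Finset ι} (hS : S.card = d + 2) :
    IsAbsExtensor X (faceBoundary S) := by
  obtain ⟨i₀, hi₀⟩ : ∃ i, i ∈ S := Finset.card_pos.1 (by omega)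
  have hSne : S.Nonempty := ⟨i₀, hi₀⟩
  let e : Fin (d + 1) ≃ S.erase i₀ :=
    (Finset.equivFinOfCardEq (by rw [Finset.card_erase_of_mem hi₀, hS]; rfl)).symm
  let incl : C(faceBoundary S, nSphere d) :=
    (⟨faceChart e ∘ Subtype.val, (continuous_faceChart e).comp continuous_subtype_val⟩ :
      C(faceBoundary S, _)).toSphere fun p => faceChart_ne_zero e hSne p.2
  have hretr : ∀ v : nSphere d, ∃ k ∈ S, S.inf' hSne (faceUnchart e v) < faceUnchart e v k :=
    fun v => exists_inf'_lt_faceUnchart e hSne hi₀ (ne_zero_of_mem_nSphere v.2)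
  let retr : C(nSphere d, faceBoundary S) :=
    ⟨fun v => ⟨faceProj S hSne (faceUnchart e v), faceProj_mem_faceBoundary hSne (hretr v)⟩,
      ((continuousOn_faceProj hSne).comp_continuous
        ((continuous_faceUnchart e).comp continuous_subtype_val) hretr).subtype_mk _⟩
  refine h.of_retract incl retr fun p => Subtype.ext ?_
  change faceProj S hSne (faceUnchart e (‖faceChart e p‖⁻¹ • faceChart e p)) = p
  rw [faceProj_affine hSne (inv_pos.2 (norm_pos_iff.2 (faceChart_ne_zero e hSne p.2)))
    (faceUnchart_smul_faceChart e _ p), faceProj_eq_self hSne p.2]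

section PushOff

variable {X ι : Type} [TopologicalSpace X] [Fintype ι]

/-- On the preimage of the face `S`, `ψ` is replaced by an extension into `faceBoundary S` of its
restriction to the preimage of `faceBoundary S`. -/
theorem exists_push_off_face {S : Finset ι} (hK : IsAbsExtensor X (faceBoundary S))
    (ψ : C(X, ι → ℝ)) (hψ : ∀ x, ψ x ∈ stdSimplex ℝ ι)
    (hord : ∀ x, (ψ x).support.ncard ≤ S.card) :
    ∃ ψ' : C(X, ι → ℝ), (∀ x, ψ' x ∈ stdSimplex ℝ ι) ∧
      (∀ x, (ψ' x).support ⊆ (ψ x).support) ∧ ∀ x, ¬ ↑S ⊆ (ψ' x).support := by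
  classical
  have hfull : ∀ x, ↑S ⊆ (ψ x).support → (ψ x).support = S := fun x hS =>
    (Set.eq_of_subset_of_ncard_le hS (by simpa using hord x) (toFinite _)).symm
  let σ : Set X := {x | (ψ x).support ⊆ S}
  let B : Set X := ψ ⁻¹' faceBoundary S
  have hB : IsClosed B := (isClosed_faceBoundary S).preimage ψ.continuous
  obtain ⟨g, hg⟩ := hK B hB
    ⟨fun x => ⟨ψ x, x.2⟩, (ψ.continuous.comp continuous_subtype_val).subtype_mk _⟩
  have hgB : ∀ x ∈ B, (g x : ι → ℝ) = ψ x := fun x hx => congrArg Subtype.val (hg ⟨x, hx⟩)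
  have hfrontier : ∀ x ∈ frontier σ, (g x : ι → ℝ) = ψ x := by
    intro x hx
    refine hgB x ⟨hψ x, ssubset_iff_subset_not_subset.2 ⟨?_, fun hSx => ?_⟩⟩
    · exact ((isClosed_setOf_support_subset _).preimage ψ.continuous).frontier_subset hx
    · refine hx.2 (mem_interior.2 ⟨_, fun y hy => (hfull y hy).subset, ?_, hSx⟩)
      exact (isOpen_setOf_subset_support S).preimage ψ.continuous
  refine ⟨⟨σ.piecewise (fun x => (g x : ι → ℝ)) ψ,
    (continuous_subtype_val.comp g.continuous).piecewise hfrontier ψ.continuous⟩,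
    fun x => ?_, fun x => ?_, fun x => ?_⟩ <;>
  by_cases hx : x ∈ σ <;>
  simp only [ContinuousMap.coe_mk, piecewise_eq_of_mem, piecewise_eq_of_notMem, hx,
    not_false_eq_true]
  · exact (g x).2.1
  · exact hψ x
  · by_cases hxB : x ∈ B
    · rw [hgB x hxB]
    · have hSx : ↑S ⊆ (ψ x).support := by
        by_contra h
        exact hxB ⟨hψ x, ssubset_iff_subset_not_subset.2 ⟨hx, h⟩⟩
      rw [hfull x hSx]
      exact (g x).2.2.subset
  · exact subset_rfl
  · exact (ssubset_iff_subset_not_subset.1 (g x).2.2).2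
  · exact fun hS => hx (hfull x hS).subset

theorem exists_order_le_of_isAbsExtensor {d : ℕ} (hK : IsAbsExtensor X (nSphere d))
    (ψ : C(X, ι → ℝ)) (hψ : ∀ x, ψ x ∈ stdSimplex ℝ ι)
    (hord : ∀ x, (ψ x).support.ncard ≤ d + 2) :
    ∃ ψ' : C(X, ι → ℝ), (∀ x, ψ' x ∈ stdSimplex ℝ ι) ∧
      (∀ x, (ψ' x).support ⊆ (ψ x).support) ∧ ∀ x, (ψ' x).support.ncard ≤ d + 1 := by
  classical
  suffices H : ∀ 𝒮 : Finset (Finset ι), (∀ S ∈ 𝒮, S.card = d + 2) →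
      ∃ ψ' : C(X, ι → ℝ), (∀ x, ψ' x ∈ stdSimplex ℝ ι) ∧
        (∀ x, (ψ' x).support ⊆ (ψ x).support) ∧ ∀ x, ∀ S ∈ 𝒮, ¬ ↑S ⊆ (ψ' x).support by
    obtain ⟨ψ', hψ', hsub, havoid⟩ :=
      H (Finset.univ.powersetCard (d + 2)) fun S hS => (Finset.mem_powersetCard.1 hS).2
    refine ⟨ψ', hψ', hsub, fun x => ?_⟩
    by_contra! hlt
    obtain ⟨T, hT, hTcard⟩ := Set.exists_subset_card_eq (show d + 2 ≤ (ψ' x).support.ncard by omega)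
    have hTfin : T.Finite := toFinite T
    refine havoid x hTfin.toFinset (Finset.mem_powersetCard.2 ⟨Finset.subset_univ _, ?_⟩)
      (by simpa using hT)
    rwa [← ncard_eq_toFinset_card _ hTfin]
  intro 𝒮
  induction 𝒮 using Finset.induction_on with
  | empty => exact fun _ => ⟨ψ, hψ, fun _ => subset_rfl, by simp⟩
  | insert S 𝒮 _ ih =>
    intro h𝒮
    have hS := h𝒮 S (Finset.mem_insert_self S 𝒮)
    obtain ⟨ψ₁, hψ₁, hsub₁, havoid₁⟩ := ih fun T hT => h𝒮 T (Finset.mem_insert_of_mem hT)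
    obtain ⟨ψ₂, hψ₂, hsub₂, havoid₂⟩ := exists_push_off_face (isAbsExtensor_faceBoundary hK hS)
      ψ₁ hψ₁ fun x => (ncard_le_ncard (hsub₁ x) (toFinite _)).trans ((hord x).trans hS.ge)
    refine ⟨ψ₂, hψ₂, fun x => (hsub₂ x).trans (hsub₁ x), fun x T hT => ?_⟩
    rcases Finset.mem_insert.1 hT with rfl | hT
    · exact havoid₂ x
    · exact fun hsub => havoid₁ x T hT (hsub.trans (hsub₂ x))

theorem exists_order_le_of_forall_isAbsExtensor {n : ℕ}
    (hK : ∀ d, n ≤ d → IsAbsExtensor X (nSphere d)) (k : ℕ)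
    (ψ : C(X, ι → ℝ)) (hψ : ∀ x, ψ x ∈ stdSimplex ℝ ι)
    (hord : ∀ x, (ψ x).support.ncard ≤ n + 1 + k) :
    ∃ ψ' : C(X, ι → ℝ), (∀ x, ψ' x ∈ stdSimplex ℝ ι) ∧
      (∀ x, (ψ' x).support ⊆ (ψ x).support) ∧ ∀ x, (ψ' x).support.ncard ≤ n + 1 := by
  induction k generalizing ψ with
  | zero => exact ⟨ψ, hψ, fun _ => subset_rfl, hord⟩
  | succ k ih =>
    obtain ⟨ψ₁, hψ₁, hsub₁, hord₁⟩ :=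
      exists_order_le_of_isAbsExtensor (hK (n + k) (by omega)) ψ hψ fun x => by
        have := hord x; omega
    obtain ⟨ψ₂, hψ₂, hsub₂, hord₂⟩ := ih ψ₁ hψ₁ fun x => by have := hord₁ x; omega
    exact ⟨ψ₂, hψ₂, fun x => (hsub₂ x).trans (hsub₁ x), hord₂⟩

end PushOff

theorem covDimLE_of_forall_isAbsExtensor {X : Type} [TopologicalSpace X] [NormalSpace X]
    {n : ℕ} (hK : ∀ d, n ≤ d → IsAbsExtensor X (nSphere d)) : CovDimLE X n := by
  intro U hUfin hUo hUcov
  have : Fintype U := hUfin.fintype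
  obtain ⟨ψ₀, hψ₀, hψ₀U⟩ := exists_stdSimplex_map_subordinate (Subtype.val : U → Set X)
    (fun u => hUo u u.2) (by rwa [← sUnion_eq_iUnion])
  obtain ⟨ψ, hψ, hsub, hord⟩ := exists_order_le_of_forall_isAbsExtensor hK (Nat.card U)
    ψ₀ hψ₀ fun x => (ncard_le_card _).trans (Nat.le_add_left _ _)
  exact exists_refinement_of_stdSimplex_map ψ hψ
    (fun u => ⟨u, u.2, fun x hx => hψ₀U x u (hsub x hx)⟩) hord

/-- For a compact metrizable space `X`, the sphere `Sⁿ` is an absolute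
extensor for `X` iff the covering dimension of `X` is at most `n`. -/
theorem sphere_absolute_extensor_iff_covDim_le
    (X : Type) [TopologicalSpace X] [CompactSpace X]
    [TopologicalSpace.MetrizableSpace X] (n : ℕ) :
    IsAbsExtensor X (↥(nSphere n)) ↔ CovDimLE X n := by
  constructor
  · intro h
    have hA := approxByNonvanishing_of_isAbsExtensor h
    exact covDimLE_of_forall_isAbsExtensor fun d hd =>
      isAbsExtensor_of_approxByNonvanishing (hA.mono (by omega))
  · intro h
    exact isAbsExtensor_of_approxByNonvanishing (approxByNonvanishing_of_covDimLE h)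
end
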